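/- arXiv:2003.12005 — 2 statements merged into one kernel-verified Lean document; each statement's English description precedes it below -/
import Mathlib

section
/- Let W = diag(w) for a strictly positive vector w ∈ ℝ^N, and suppose the linear map 𝒜 : ℝ^N → ℂ^{n×n} satisfies the ℓ^q-robust nullspace property of order s with respect to a norm ‖·‖ with parameters ρ ∈ (0,1) and τ > 0. If κ(w) = (max_i w_i)/(min_i w_i) < 1/ρ, then the composed map 𝒜 ∘ W^{-1} satisfies the ℓ^q-robust nullspace property of order s with respect to ‖·‖ with parameters ρ̃ = κ(w)·ρ and τ̃ = (max_i w_i)·τ. -/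
open Finset

/-- The `ℓ^q`-robust nullspace property of order `s` of a linear map
`A : ℝ^N → ℂ^{n×n}` with respect to a norm `nrm` with parameters `ρ, τ`. -/
def NSP {N n : ℕ} (A : (Fin N → ℝ) →ₗ[ℝ] Matrix (Fin n) (Fin n) ℂ)
    (nrm : Matrix (Fin n) (Fin n) ℂ → ℝ) (q : ℝ) (s : ℕ) (ρ τ : ℝ) : Prop :=
  ∀ S : Finset (Fin N), S.card ≤ s → ∀ v : Fin N → ℝ,
    (∑ i ∈ S, |v i| ^ q) ^ (1 / q) ≤
      ρ / (s : ℝ) ^ (1 - 1 / q) * (∑ i ∈ Sᶜ, |v i|) + τ * nrm (A v)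

/-! Substituting `v = W u` turns the nullspace inequality of `𝒜` at `u = W⁻¹ v` into one at `v`:
on `S` the `ℓ^q` norm of `v` is at most `max w` times that of `u`, while off `S` the `ℓ¹` norm of
`u` is at most that of `v` divided by `min w`. -/

theorem rpow_sum_abs_rpow_le_mul {ι : Type*} (S : Finset ι) {x y : ι → ℝ} {q M : ℝ}
    (hq : 0 < q) (hM : 0 ≤ M) (hxy : ∀ i ∈ S, |x i| ≤ M * |y i|) :
    (∑ i ∈ S, |x i| ^ q) ^ (1 / q) ≤ M * (∑ i ∈ S, |y i| ^ q) ^ (1 / q) := by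
  have hsum : ∑ i ∈ S, |x i| ^ q ≤ M ^ q * ∑ i ∈ S, |y i| ^ q := by
    rw [mul_sum]
    gcongr with i hi
    rw [← Real.mul_rpow hM (abs_nonneg _)]
    exact Real.rpow_le_rpow (abs_nonneg _) (hxy i hi) hq.le
  calc (∑ i ∈ S, |x i| ^ q) ^ (1 / q) ≤ (M ^ q * ∑ i ∈ S, |y i| ^ q) ^ (1 / q) := by gcongr
    _ = M * (∑ i ∈ S, |y i| ^ q) ^ (1 / q) := by
      rw [Real.mul_rpow (by positivity) (by positivity), ← Real.rpow_mul hM,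
        mul_one_div_cancel hq.ne', Real.rpow_one]

theorem NSP.comp_of_abs_le {N n : ℕ} {A : (Fin N → ℝ) →ₗ[ℝ] Matrix (Fin n) (Fin n) ℂ}
    {nrm : Matrix (Fin n) (Fin n) ℂ → ℝ} {q : ℝ} {s : ℕ} {ρ τ : ℝ} (hA : NSP A nrm q s ρ τ)
    (T : (Fin N → ℝ) →ₗ[ℝ] (Fin N → ℝ)) {M L : ℝ} (hq : 0 < q) (hρ : 0 ≤ ρ) (hM : 0 ≤ M)
    (hTM : ∀ v i, |v i| ≤ M * |T v i|) (hTL : ∀ v i, |T v i| ≤ L * |v i|) :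
    NSP (A ∘ₗ T) nrm q s (M * L * ρ) (M * τ) := by
  intro S hS v
  have hc : 0 ≤ ρ / (s : ℝ) ^ (1 - 1 / q) := by positivity
  calc (∑ i ∈ S, |v i| ^ q) ^ (1 / q) ≤ M * (∑ i ∈ S, |T v i| ^ q) ^ (1 / q) :=
        rpow_sum_abs_rpow_le_mul S hq hM fun i _ => hTM v i
    _ ≤ M * (ρ / (s : ℝ) ^ (1 - 1 / q) * (∑ i ∈ Sᶜ, |T v i|) + τ * nrm (A (T v))) :=
        mul_le_mul_of_nonneg_left (hA S hS (T v)) hM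
    _ ≤ M * (ρ / (s : ℝ) ^ (1 - 1 / q) * (L * ∑ i ∈ Sᶜ, |v i|) + τ * nrm (A (T v))) := by
        gcongr
        rw [mul_sum]
        exact sum_le_sum fun i _ => hTL v i
    _ = M * L * ρ / (s : ℝ) ^ (1 - 1 / q) * (∑ i ∈ Sᶜ, |v i|) + M * τ * nrm ((A ∘ₗ T) v) := by
        rw [LinearMap.comp_apply]
        ring

theorem stmt0_general {N n : ℕ} [NeZero N]
    (A : (Fin N → ℝ) →ₗ[ℝ] Matrix (Fin n) (Fin n) ℂ)
    (nrm : Matrix (Fin n) (Fin n) ℂ → ℝ) (q : ℝ) (hq : 1 ≤ q)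
    (s : ℕ) (ρ τ : ℝ) (hρ : ρ ∈ Set.Ioo (0 : ℝ) 1)
    (hA : NSP A nrm q s ρ τ)
    (w : Fin N → ℝ) (hw : ∀ i, 0 < w i)
    (κ : ℝ) (hκ : κ = (⨆ i, w i) / (⨅ i, w i)) :
    NSP (A ∘ₗ (Matrix.diagonal fun i => (w i)⁻¹).mulVecLin) nrm q s
      (κ * ρ) ((⨆ i, w i) * τ) := by
  set M := ⨆ i, w i
  set m := ⨅ i, w i
  have hm : 0 < m := by
    obtain ⟨i₀, hi₀⟩ := exists_eq_ciInf_of_finite (f := w)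
    exact (hw i₀).trans_eq hi₀
  have hupper : ∀ (v : Fin N → ℝ) i, |v i| ≤ M * |v i / w i| := by
    intro v i
    rw [abs_div, abs_of_pos (hw i), mul_div_assoc', le_div_iff₀ (hw i), mul_comm]
    exact mul_le_mul_of_nonneg_right (Finite.le_ciSup w i) (abs_nonneg _)
  have hlower : ∀ (v : Fin N → ℝ) i, |v i / w i| ≤ m⁻¹ * |v i| := by
    intro v i
    rw [abs_div, abs_of_pos (hw i), inv_mul_eq_div]
    exact div_le_div_of_nonneg_left (abs_nonneg _) hm (Finite.ciInf_le w i)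
  rw [hκ, div_eq_mul_inv]
  exact hA.comp_of_abs_le _ (by linarith) hρ.1.le (Real.iSup_nonneg fun i => (hw i).le)
    (by simpa [Matrix.mulVec_diagonal, div_eq_inv_mul] using hupper)
    (by simpa [Matrix.mulVec_diagonal, div_eq_inv_mul] using hlower)

theorem stmt0 {N n : ℕ} [NeZero N]
    (A : (Fin N → ℝ) →ₗ[ℝ] Matrix (Fin n) (Fin n) ℂ)
    (nrm : Matrix (Fin n) (Fin n) ℂ → ℝ) (q : ℝ) (hq : 1 ≤ q)
    (s : ℕ) (ρ τ : ℝ) (hρ : ρ ∈ Set.Ioo (0 : ℝ) 1) (hτ : 0 < τ)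
    (hA : NSP A nrm q s ρ τ)
    (w : Fin N → ℝ) (hw : ∀ i, 0 < w i)
    (κ : ℝ) (hκ : κ = (⨆ i, w i) / (⨅ i, w i))
    (hκρ : κ < 1 / ρ) :
    NSP (A ∘ₗ (Matrix.diagonal fun i => (w i)⁻¹).mulVecLin) nrm q s
      (κ * ρ) ((⨆ i, w i) * τ) :=
  stmt0_general A nrm q hq s ρ τ hρ hA w hw κ hκ
end

section
/- Let a ∈ ℂ^n be a random vector whose real and imaginary parts of the entries are independent centered sub-Gaussian random variables with ψ₂-norms bounded by K, and let Z ∈ ℂ^{n×n}. Then for all t ≥ 0, P(|⟨a, Za⟩ − E⟨a, Za⟩| > t) ≤ 4 exp(−c min{t²/(4K⁴‖Z‖_F²), t/(√2 K²‖Z‖_o)}), where c is the universal constant in the real Hanson–Wright inequality. -/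
/-!
Writing `a = x + i y`, the real and imaginary parts of `σ ⟨a, Z a⟩` are real quadratic forms in
`(x, y)`, with the matrix `[[Re W, -Im W], [Im W, Re W]]` for `W = σ Z` and `-i σ Z` respectively;
its Frobenius norm is `√2 ‖σ Z‖_F` and its operator norm `‖σ Z‖_o`. The real Hanson–Wright
inequality bounds both tails, and since `‖w‖ ≤ √2 max (|Re w|, |Im w|)`, a union bound gives the
complex tail. Taking `|σ| = √2` puts all tails at the same level `t`.
-/

open Finset MeasureTheory Matrix

/-- Frobenius norm of a matrix. -/
noncomputable def frob {m : Type*} [Fintype m] {𝕜 : Type*} [RCLike 𝕜]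
    (M : Matrix m m 𝕜) : ℝ :=
  Real.sqrt (∑ i, ∑ j, ‖M i j‖ ^ 2)

/-- Operator (spectral) norm of a matrix, ℓ²→ℓ². -/
noncomputable def opN {m : Type*} [Fintype m] {𝕜 : Type*} [RCLike 𝕜]
    (M : Matrix m m 𝕜) : ℝ :=
  sSup {r : ℝ | ∃ x : m → 𝕜, Real.sqrt (∑ i, ‖x i‖ ^ 2) ≤ 1 ∧
    r = Real.sqrt (∑ i, ‖M.mulVec x i‖ ^ 2)}

theorem frob_smul {m 𝕜 : Type*} [Fintype m] [RCLike 𝕜] (σ : 𝕜) (M : Matrix m m 𝕜) :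
    frob (σ • M) = ‖σ‖ * frob M := by
  simp only [frob, Matrix.smul_apply, norm_smul, mul_pow, ← Finset.mul_sum]
  rw [Real.sqrt_mul (by positivity), Real.sqrt_sq (norm_nonneg σ)]

theorem opN_smul {m 𝕜 : Type*} [Fintype m] [RCLike 𝕜] (σ : 𝕜) (M : Matrix m m 𝕜) :
    opN (σ • M) = ‖σ‖ * opN M := by
  have hnorm (x : m → 𝕜) :
      √(∑ i, ‖((σ • M) *ᵥ x) i‖ ^ 2) = ‖σ‖ * √(∑ i, ‖(M *ᵥ x) i‖ ^ 2) := by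
    simp only [smul_mulVec, Pi.smul_apply, norm_smul, mul_pow, ← Finset.mul_sum]
    rw [Real.sqrt_mul (by positivity), Real.sqrt_sq (norm_nonneg σ)]
  rw [opN, opN, ← smul_eq_mul, ← Real.sSup_smul_of_nonneg (norm_nonneg σ)]
  congr 1
  ext r
  simp only [hnorm, Set.mem_ofPred_eq, Set.mem_smul_set, smul_eq_mul]
  constructor
  · rintro ⟨x, hx, rfl⟩
    exact ⟨_, ⟨x, hx, rfl⟩, rfl⟩
  · rintro ⟨_, ⟨x, hx, rfl⟩, rfl⟩
    exact ⟨x, hx, rfl⟩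

section Realification

variable {n : ℕ}

noncomputable def realify (W : Matrix (Fin n) (Fin n) ℂ) : Matrix (Fin (n + n)) (Fin (n + n)) ℝ :=
  reindex finSumFinEquiv finSumFinEquiv
    (fromBlocks (W.map Complex.re) (-W.map Complex.im) (W.map Complex.im) (W.map Complex.re))

def realVec (a : Fin n → ℂ) : Fin (n + n) → ℝ :=
  Fin.append (fun k => (a k).re) (fun k => (a k).im)

theorem realVec_surjective : Function.Surjective (realVec (n := n)) := fun x =>
  ⟨fun k => ⟨x (Fin.castAdd n k), x (Fin.natAdd n k)⟩, Fin.append_castAdd_natAdd⟩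

theorem sum_sq_norm_realVec (a : Fin n → ℂ) : ∑ i, ‖realVec a i‖ ^ 2 = ∑ k, ‖a k‖ ^ 2 := by
  simp only [realVec, Fin.sum_univ_add, Fin.append_left, Fin.append_right, Real.norm_eq_abs,
    sq_abs, Complex.sq_norm, Complex.normSq_apply, ← Finset.sum_add_distrib]
  exact Finset.sum_congr rfl fun _ _ => by ring

theorem realVec_dotProduct_realVec (a b : Fin n → ℂ) :
    realVec a ⬝ᵥ realVec b = (star a ⬝ᵥ b).re := by
  simp only [realVec, dotProduct, Fin.sum_univ_add, Fin.append_left, Fin.append_right,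
    Complex.re_sum, ← Finset.sum_add_distrib, Pi.star_apply, Complex.star_def, Complex.mul_re,
    Complex.conj_re, Complex.conj_im]
  exact Finset.sum_congr rfl fun _ _ => by ring

theorem realify_mulVec_realVec (W : Matrix (Fin n) (Fin n) ℂ) (a : Fin n → ℂ) :
    realify W *ᵥ realVec a = realVec (W *ᵥ a) := by
  funext i
  refine Fin.addCases (fun i => ?_) (fun i => ?_) i <;>
  simp only [realify, realVec, mulVec, dotProduct, Fin.sum_univ_add, Fin.append_left,
    Fin.append_right, reindex_apply, submatrix_apply, finSumFinEquiv_symm_apply_castAdd,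
    finSumFinEquiv_symm_apply_natAdd, fromBlocks_apply₁₁, fromBlocks_apply₁₂, fromBlocks_apply₂₁,
    fromBlocks_apply₂₂, map_apply, Matrix.neg_apply, Complex.re_sum, Complex.im_sum,
    ← Finset.sum_add_distrib, Complex.mul_re, Complex.mul_im] <;>
  exact Finset.sum_congr rfl fun _ _ => by ring

theorem frob_realify (W : Matrix (Fin n) (Fin n) ℂ) : frob (realify W) = √2 * frob W := by
  rw [frob, frob, ← Real.sqrt_mul zero_le_two, Finset.mul_sum]
  congr 1
  simp only [realify, Fin.sum_univ_add, reindex_apply, submatrix_apply,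
    finSumFinEquiv_symm_apply_castAdd, finSumFinEquiv_symm_apply_natAdd, fromBlocks_apply₁₁,
    fromBlocks_apply₁₂, fromBlocks_apply₂₁, fromBlocks_apply₂₂, map_apply, Matrix.neg_apply,
    norm_neg, ← Finset.sum_add_distrib, Finset.mul_sum]
  exact Finset.sum_congr rfl fun _ _ => Finset.sum_congr rfl fun _ _ => by
    simp only [Real.norm_eq_abs, sq_abs, Complex.sq_norm, Complex.normSq_apply]
    ring

theorem opN_realify (W : Matrix (Fin n) (Fin n) ℂ) : opN (realify W) = opN W := by
  simp only [opN, realVec_surjective.exists, realify_mulVec_realVec, sum_sq_norm_realVec]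

end Realification

section ComplexTail

open Complex

variable {Ω : Type*} [MeasurableSpace Ω] {μ : Measure Ω}

theorem integral_re_im_of_integrable_iff {Y : Ω → ℂ}
    (h : Integrable (fun ω => (Y ω).re) μ ↔ Integrable (fun ω => (Y ω).im) μ) :
    ∫ ω, (Y ω).re ∂μ = (∫ ω, Y ω ∂μ).re ∧ ∫ ω, (Y ω).im ∂μ = (∫ ω, Y ω ∂μ).im := by
  by_cases hre : Integrable (fun ω => (Y ω).re) μ
  · have hY : Integrable Y μ := Integrable.re_im_iff.mp ⟨hre, h.mp hre⟩
    exact ⟨integral_re hY, integral_im hY⟩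
  · have hY : ¬Integrable Y μ := fun hY => hre hY.re
    simp [integral_undef hre, integral_undef (h.not.mp hre), integral_undef hY]

theorem not_integrable_add_and_sub {f g : Ω → ℝ} (h : ¬(Integrable f μ ↔ Integrable g μ)) :
    ¬Integrable (f + g) μ ∧ ¬Integrable (g - f) μ := by
  constructor
  · intro hs
    exact h ⟨fun hf => by simpa using hs.sub hf, fun hg => by simpa using hs.sub hg⟩
  · intro hd
    exact h ⟨fun hf => by simpa using hd.add hf, fun hg => by simpa using hg.sub hd⟩

/-- Since `∫` is `0` on non-integrable functions, the real and imaginary parts need not commute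
with `∫`; they do after multiplying by `√2` when `Re X` and `Im X` are both or neither integrable,
and otherwise after multiplying by `1 - I`, as then `Re X ± Im X` are both non-integrable. -/
theorem exists_norm_eq_sqrt_two_integral_re_im_mul (X : Ω → ℂ) :
    ∃ σ : ℂ, ‖σ‖ = √2 ∧ ∫ ω, (σ * X ω).re ∂μ = (σ * ∫ ω, X ω ∂μ).re ∧
      ∫ ω, (σ * X ω).im ∂μ = (σ * ∫ ω, X ω ∂μ).im := by
  simp_rw [← integral_const_mul]
  by_cases h : Integrable (fun ω => (X ω).re) μ ↔ Integrable (fun ω => (X ω).im) μ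
  · refine ⟨√2, by simp, integral_re_im_of_integrable_iff ?_⟩
    have hunit : IsUnit √2 := (Real.sqrt_pos.mpr two_pos).ne'.isUnit
    simpa only [re_ofReal_mul, im_ofReal_mul, integrable_const_mul_iff hunit] using h
  · obtain ⟨hadd, hsub⟩ := not_integrable_add_and_sub h
    refine ⟨1 - I, ?_, integral_re_im_of_integrable_iff (iff_of_false ?_ ?_)⟩
    · simp [norm_def, normSq_apply, one_add_one_eq_two]
    · simpa [mul_re, Pi.add_def] using hadd
    · simpa [mul_im, Pi.sub_def, ← sub_eq_add_neg] using hsub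

theorem measureReal_lt_norm_sub_integral_le [IsFiniteMeasure μ] (X : Ω → ℂ) {t E : ℝ}
    (h : ∀ σ : ℂ, ‖σ‖ = √2 →
      μ.real {ω | t < |(σ * X ω).re - ∫ ω', (σ * X ω').re ∂μ|} ≤ E) :
    μ.real {ω | t < ‖X ω - ∫ ω', X ω' ∂μ‖} ≤ 2 * E := by
  obtain ⟨σ, hσ, hre, him⟩ := exists_norm_eq_sqrt_two_integral_re_im_mul (μ := μ) X
  have hre_neg_I (w : ℂ) : (-I * w).re = w.im := by simp
  have hsub : {ω | t < ‖X ω - ∫ ω', X ω' ∂μ‖} ⊆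
      {ω | t < |(σ * X ω).re - ∫ ω', (σ * X ω').re ∂μ|} ∪
      {ω | t < |(-I * σ * X ω).re - ∫ ω', (-I * σ * X ω').re ∂μ|} := by
    intro ω
    simp only [Set.mem_union, Set.mem_ofPred_eq, mul_assoc, hre_neg_I, hre, him, ← sub_re,
      ← sub_im, ← mul_sub]
    contrapose!
    rintro ⟨h1, h2⟩
    have : ‖σ‖ * ‖X ω - ∫ ω', X ω' ∂μ‖ ≤ ‖σ‖ * t := by
      rw [← norm_mul, hσ]
      exact (norm_le_sqrt_two_mul_max _).trans (by gcongr; exact max_le h1 h2)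
    exact le_of_mul_le_mul_left this (by simp [hσ])
  calc μ.real {ω | t < ‖X ω - ∫ ω', X ω' ∂μ‖}
      ≤ μ.real {ω | t < |(σ * X ω).re - ∫ ω', (σ * X ω').re ∂μ|} +
        μ.real {ω | t < |(-I * σ * X ω).re - ∫ ω', (-I * σ * X ω').re ∂μ|} :=
        (measureReal_mono hsub).trans (measureReal_union_le _ _)
    _ ≤ E + E := add_le_add (h σ hσ) (h (-I * σ) (by simp [hσ]))
    _ = 2 * E := by ring

end ComplexTail

theorem stmt9_general {n : ℕ} {Ω : Type*} [MeasurableSpace Ω] (μ : Measure Ω)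
    [IsProbabilityMeasure μ]
    (a : Ω → Fin n → ℂ) (K c : ℝ)
    (Z : Matrix (Fin n) (Fin n) ℂ)
    -- the real Hanson–Wright inequality for the realified vector (Re a, Im a)
    (hHW : ∀ (M : Matrix (Fin (n + n)) (Fin (n + n)) ℝ) (t : ℝ), 0 ≤ t →
      (μ {ω | t < |(Fin.append (fun k => (a ω k).re) (fun k => (a ω k).im)) ⬝ᵥ
            M.mulVec (Fin.append (fun k => (a ω k).re) (fun k => (a ω k).im)) -
          ∫ ω', (Fin.append (fun k => (a ω' k).re) (fun k => (a ω' k).im)) ⬝ᵥ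
            M.mulVec (Fin.append (fun k => (a ω' k).re) (fun k => (a ω' k).im)) ∂μ|}).toReal ≤
        2 * Real.exp (-(c * min (t ^ 2 / (K ^ 4 * frob M ^ 2)) (t / (K ^ 2 * opN M))))) :
    ∀ t : ℝ, 0 ≤ t →
      (μ {ω | t < ‖(star (a ω) ⬝ᵥ Z.mulVec (a ω)) -
          ∫ ω', star (a ω') ⬝ᵥ Z.mulVec (a ω') ∂μ‖}).toReal ≤
        4 * Real.exp (-(c * min (t ^ 2 / (4 * K ^ 4 * frob Z ^ 2))
          (t / (Real.sqrt 2 * K ^ 2 * opN Z)))) := by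
  intro t ht
  have hform (σ : ℂ) (x : Fin n → ℂ) :
      realVec x ⬝ᵥ realify (σ • Z) *ᵥ realVec x = (σ * (star x ⬝ᵥ Z *ᵥ x)).re := by
    rw [realify_mulVec_realVec, realVec_dotProduct_realVec, smul_mulVec, dotProduct_smul,
      smul_eq_mul]
  rw [show ∀ x : ℝ, 4 * x = 2 * (2 * x) by intro x; ring]
  refine measureReal_lt_norm_sub_integral_le _ fun σ hσ => ?_
  have hfrob : K ^ 4 * frob (realify (σ • Z)) ^ 2 = 4 * K ^ 4 * frob Z ^ 2 := by
    rw [frob_realify, frob_smul, hσ, ← mul_assoc, Real.mul_self_sqrt zero_le_two]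
    ring
  have hopN : K ^ 2 * opN (realify (σ • Z)) = √2 * K ^ 2 * opN Z := by
    rw [opN_realify, opN_smul, hσ]
    ring
  simpa only [Measure.real, ← realVec.eq_1, hform, hfrob, hopN] using hHW (realify (σ • Z)) t ht

theorem stmt9 {n : ℕ} {Ω : Type*} [MeasurableSpace Ω] (μ : Measure Ω)
    [IsProbabilityMeasure μ]
    (a : Ω → Fin n → ℂ) (K c : ℝ) (hK : 0 < K) (hc : 0 < c)
    (Z : Matrix (Fin n) (Fin n) ℂ)
    -- the real Hanson–Wright inequality for the realified vector (Re a, Im a)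
    (hHW : ∀ (M : Matrix (Fin (n + n)) (Fin (n + n)) ℝ) (t : ℝ), 0 ≤ t →
      (μ {ω | t < |(Fin.append (fun k => (a ω k).re) (fun k => (a ω k).im)) ⬝ᵥ
            M.mulVec (Fin.append (fun k => (a ω k).re) (fun k => (a ω k).im)) -
          ∫ ω', (Fin.append (fun k => (a ω' k).re) (fun k => (a ω' k).im)) ⬝ᵥ
            M.mulVec (Fin.append (fun k => (a ω' k).re) (fun k => (a ω' k).im)) ∂μ|}).toReal ≤
        2 * Real.exp (-(c * min (t ^ 2 / (K ^ 4 * frob M ^ 2)) (t / (K ^ 2 * opN M))))) :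
    ∀ t : ℝ, 0 ≤ t →
      (μ {ω | t < ‖(star (a ω) ⬝ᵥ Z.mulVec (a ω)) -
          ∫ ω', star (a ω') ⬝ᵥ Z.mulVec (a ω') ∂μ‖}).toReal ≤
        4 * Real.exp (-(c * min (t ^ 2 / (4 * K ^ 4 * frob Z ^ 2))
          (t / (Real.sqrt 2 * K ^ 2 * opN Z)))) :=
  stmt9_general μ a K c Z hHW
end
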